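/- arXiv:2104.07769 — 7 statements merged into one kernel-verified Lean document; each statement's English description precedes it below -/
import Mathlib

section
/- Let X be a family of subsets of a set M that is linearly ordered under inclusion, with |X| = n. Then the number of atoms of the Boolean algebra of subsets of M generated by X is at most n + 1. -/
/-- Auxiliary: two upward-closed subsets of a chain with `card S₁ ≤ card S₂`
satisfy `S₁ ⊆ S₂`. -/
lemma chain_upclosed_subset {M : Type*} {X S₁ S₂ : Finset (Set M)}
    (hX : ∀ A ∈ X, ∀ B ∈ X, A ⊆ B ∨ B ⊆ A)
    (hS₁ : S₁ ⊆ X) (hS₂ : S₂ ⊆ X)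
    (hup₁ : ∀ A ∈ S₁, ∀ B ∈ X, A ⊆ B → B ∈ S₁)
    (hup₂ : ∀ A ∈ S₂, ∀ B ∈ X, A ⊆ B → B ∈ S₂)
    (hcard : S₁.card ≤ S₂.card) : S₁ ⊆ S₂ := by
  intro A hA
  by_contra hA2
  have hsub : S₂ ⊆ S₁ := by
    intro B hB
    rcases hX A (hS₁ hA) B (hS₂ hB) with h | h
    · exact hup₁ A hA B (hS₂ hB) h
    · exact absurd (hup₂ B hB A (hS₁ hA) h) hA2
  have hss : S₂ ⊂ S₁ := hsub.ssubset_of_ne (fun h => hA2 (h ▸ hA))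
  exact absurd hcard (not_le.mpr (Finset.card_lt_card hss))

/-- If `X` is a finite family of subsets of `M` linearly ordered under
inclusion with `|X| = n`, then the Boolean algebra of subsets of `M` generated by `X`
has at most `n + 1` atoms.  The atoms of the generated Boolean algebra are exactly the
nonempty "cells" `(⋂ A ∈ S, A) ∩ (⋂ A ∈ X, A ∉ S → Aᶜ)` for `S ⊆ X`. -/
theorem stmt_0 {M : Type*} (X : Finset (Set M))
    (hX : ∀ A ∈ X, ∀ B ∈ X, A ⊆ B ∨ B ⊆ A) :
    Set.ncard {C : Set M | C.Nonempty ∧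
      ∃ S ⊆ X, C = (⋂ A ∈ S, A) ∩ ⋂ A ∈ X, ⋂ (_ : A ∉ S), Aᶜ} ≤ X.card + 1 := by
  classical
  set n := X.card with hn
  -- Key: for a nonempty cell C with witness S, {A | A ∈ X ∧ C ⊆ A} = ↑S,
  -- and S is upward closed.
  have key : ∀ C : Set M, C.Nonempty → ∀ S, S ⊆ X →
      C = (⋂ A ∈ S, A) ∩ ⋂ A ∈ X, ⋂ (_ : A ∉ S), Aᶜ →
      ({A : Set M | A ∈ X ∧ C ⊆ A} = ↑S ∧
        ∀ A ∈ S, ∀ B ∈ X, A ⊆ B → B ∈ S) := by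
    intro C hC S hS hCeq
    obtain ⟨x, hx⟩ := hC
    have hx' := hx
    rw [hCeq] at hx'
    obtain ⟨hx1, hx2⟩ := hx'
    rw [Set.mem_iInter₂] at hx1
    simp only [Set.mem_iInter, Set.mem_compl_iff] at hx2
    have hCsub : ∀ A ∈ S, C ⊆ A := by
      intro A hA y hy
      rw [hCeq] at hy
      exact Set.mem_iInter₂.mp hy.1 A hA
    constructor
    · ext A
      simp only [Set.mem_setOf_eq, Finset.mem_coe]
      constructor
      · rintro ⟨hAX, hCA⟩
        by_contra hAS
        exact hx2 A hAX hAS (hCA hx)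
      · intro hA
        exact ⟨hS hA, hCsub A hA⟩
    · intro A hA B hB hAB
      by_contra hBS
      exact hx2 B hB hBS (hAB (hx1 A hA))
  -- Map each cell to the cardinality of its determining set.
  have := Set.ncard_le_ncard_of_injOn
    (f := fun C : Set M => Set.ncard {A : Set M | A ∈ X ∧ C ⊆ A})
    (s := {C : Set M | C.Nonempty ∧
      ∃ S ⊆ X, C = (⋂ A ∈ S, A) ∩ ⋂ A ∈ X, ⋂ (_ : A ∉ S), Aᶜ})
    (t := ↑(Finset.range (n + 1)))
    (by
      rintro C ⟨hC, S, hS, hCeq⟩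
      obtain ⟨heq, -⟩ := key C hC S hS hCeq
      simp only [Finset.coe_range, Set.mem_Iio]
      rw [heq, Set.ncard_coe_finset]
      exact Nat.lt_succ_of_le (Finset.card_le_card hS))
    (by
      rintro C₁ ⟨hC₁, S₁, hS₁, hCeq₁⟩ C₂ ⟨hC₂, S₂, hS₂, hCeq₂⟩ hf
      obtain ⟨heq₁, hup₁⟩ := key C₁ hC₁ S₁ hS₁ hCeq₁
      obtain ⟨heq₂, hup₂⟩ := key C₂ hC₂ S₂ hS₂ hCeq₂
      simp only [heq₁, heq₂, Set.ncard_coe_finset] at hf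
      have hSeq : S₁ = S₂ :=
        Finset.Subset.antisymm
          (chain_upclosed_subset hX hS₁ hS₂ hup₁ hup₂ hf.le)
          (chain_upclosed_subset hX hS₂ hS₁ hup₂ hup₁ hf.ge)
      rw [hCeq₁, hCeq₂, hSeq])
    (Finset.finite_toSet _)
  rwa [Set.ncard_coe_finset, Finset.card_range] at this
end

section
/- Let K = ℚ_p and n > 1 a natural number. Suppose x, y, a ∈ K satisfy v(y − x) > 2·v(n) + v(y − a), where v is the p-adic valuation. Then (x − a)·(y − a)⁻¹ is a nonzero n-th power in K, i.e., there exists nonzero z ∈ K with z^n = (x − a)·(y − a)⁻¹. -/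
/-- In `K = ℚ_p` with `n > 1`, if `x, y, a` satisfy
`v(y - x) > 2·v(n) + v(y - a)` (valuation inequalities are encoded via the norm:
`v(s) > v(t) + k ↔ ‖s‖ < ‖t‖ · p^(-k)`, here `‖y - x‖ < ‖n‖² · ‖y - a‖`, which
faithfully captures `v(0) = ∞`), then `(x - a)·(y - a)⁻¹` is a nonzero `n`-th power. -/
theorem stmt_2 (p : ℕ) [Fact p.Prime] (n : ℕ) (hn : 1 < n) (x y a : ℚ_[p])
    (h : ‖y - x‖ < ‖(n : ℚ_[p])‖ ^ 2 * ‖y - a‖) :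
    ∃ z : ℚ_[p], z ≠ 0 ∧ z ^ n = (x - a) * (y - a)⁻¹ := by
  have hya : y - a ≠ 0 := by
    intro h0
    rw [h0, norm_zero, mul_zero] at h
    exact absurd h (not_lt.mpr (norm_nonneg _))
  have hyapos : 0 < ‖y - a‖ := norm_pos_iff.mpr hya
  set u : ℚ_[p] := (x - a) * (y - a)⁻¹ with hudef
  have hnle : ‖(n : ℚ_[p])‖ ≤ 1 := by
    have := Padic.norm_int_le_one (p := p) (n : ℤ)
    simpa using this
  have hu1 : ‖u - 1‖ < ‖(n : ℚ_[p])‖ ^ 2 := by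
    have heq : u - 1 = (x - y) * (y - a)⁻¹ := by
      field_simp [hudef]
      rw [hudef, sub_mul, inv_mul_cancel_right₀ hya]; ring
    rw [heq, norm_mul, norm_inv, norm_sub_rev, mul_inv_lt_iff₀ hyapos]
    exact h
  have hn2le : ‖(n : ℚ_[p])‖ ^ 2 ≤ 1 := by
    calc ‖(n : ℚ_[p])‖ ^ 2 ≤ 1 ^ 2 := pow_le_pow_left₀ (norm_nonneg _) hnle 2
    _ = 1 := one_pow 2
  have hu1lt : ‖u - 1‖ < 1 := lt_of_lt_of_le hu1 hn2le
  have hune : u ≠ 0 := by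
    intro h0
    rw [h0, zero_sub, norm_neg, norm_one] at hu1lt
    exact lt_irrefl 1 hu1lt
  have hule : ‖u‖ ≤ 1 := by
    have : ‖u - 1 + 1‖ ≤ max ‖u - 1‖ ‖(1 : ℚ_[p])‖ := Padic.nonarchimedean _ _
    simpa using this.trans (max_le hu1lt.le (le_of_eq norm_one))
  set U : ℤ_[p] := ⟨u, hule⟩ with hU
  set F : Polynomial ℤ_[p] := Polynomial.X ^ n - Polynomial.C U with hF
  have hderiv : F.derivative.eval 1 = (n : ℤ_[p]) := by
    simp [hF, Polynomial.derivative_pow]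
  have hnormD : ‖F.derivative.eval 1‖ = ‖(n : ℚ_[p])‖ := by
    rw [hderiv, PadicInt.norm_def]
    norm_cast
  have hnormE : ‖F.eval 1‖ = ‖u - 1‖ := by
    have : F.eval 1 = 1 - U := by simp [hF]
    rw [this, PadicInt.norm_def]
    have : ((1 - U : ℤ_[p]) : ℚ_[p]) = 1 - u := by
      push_cast [hU]
      rfl
    rw [this, norm_sub_rev]
  have hhyp : ‖F.eval 1‖ < ‖F.derivative.eval 1‖ ^ 2 := by
    rw [hnormE, hnormD]; exact hu1
  obtain ⟨z, hz, -, -, -⟩ := hensels_lemma hhyp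
  have hzn : z ^ n = U := by
    have : z ^ n - U = 0 := by simpa [hF] using hz
    exact sub_eq_zero.mp this
  have hcoe : (z : ℚ_[p]) ^ n = u := by
    have h1 : ((z ^ n : ℤ_[p]) : ℚ_[p]) = u := by rw [hzn]
    push_cast at h1
    exact h1
  refine ⟨(z : ℚ_[p]), ?_, hcoe⟩
  intro h0
  rw [h0, zero_pow (by omega)] at hcoe
  exact hune hcoe.symm
end

section
/- Let ℚ_p be the p-adic numbers and let S = {x ∈ ℚ_p : v(a₁) □₁ v(x − c) □₂ v(a₂), x − c ∈ λ·Q_{m,n}}, where a₁, a₂, c, λ ∈ ℚ_p, n ≥ 1, each of □₁, □₂ is < or no condition, and Q_{m,n} = ⋃_{k∈ℤ} p^{km}(1 + p^n ℤ_p). Then S is either empty, infinite, or equals the singleton {c}. -/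
/-- Let `S = {x ∈ ℚ_p : v(a₁) □₁ v(x - c) □₂ v(a₂), x - c ∈ λ·Q_{m,n}}`,
where each of `□₁, □₂` is `<` or no condition (encoded by booleans `b₁, b₂`), and
`Q_{m,n} = ⋃_{k∈ℤ} p^{km}(1 + p^n ℤ_p)`.  Valuation inequalities are encoded by the
norm (`v(a₁) < v(x - c) ↔ ‖x - c‖ < ‖a₁‖`), faithfully treating `v(0) = ∞`.
Then `S` is empty, infinite, or the singleton `{c}`. -/
theorem stmt_4 (p : ℕ) [Fact p.Prime] (a₁ a₂ c lam : ℚ_[p]) (m n : ℕ)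
    (hm : 1 ≤ m) (hn : 1 ≤ n) (b₁ b₂ : Bool) :
    ∀ S : Set ℚ_[p],
      S = {x : ℚ_[p] |
            (b₁ = true → ‖x - c‖ < ‖a₁‖) ∧
            (b₂ = true → ‖a₂‖ < ‖x - c‖) ∧
            ∃ (k : ℤ) (z : ℤ_[p]),
              x - c = lam * (p : ℚ_[p]) ^ (k * (m : ℤ)) * (1 + (p : ℚ_[p]) ^ n * (z : ℚ_[p]))} →
      S = ∅ ∨ S.Infinite ∨ S = {c} := by
  intro S hS
  have hlt1 : ∀ w : ℤ_[p], ‖(p : ℚ_[p]) ^ n * (w : ℚ_[p])‖ < 1 := by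
    intro w
    rw [norm_mul, norm_pow]
    calc ‖(p : ℚ_[p])‖ ^ n * ‖(w : ℚ_[p])‖ ≤ ‖(p : ℚ_[p])‖ ^ n * 1 := by
          exact mul_le_mul_of_nonneg_left w.2 (by positivity)
      _ = ‖(p : ℚ_[p])‖ ^ n := mul_one _
      _ < 1 := pow_lt_one₀ (norm_nonneg _) Padic.norm_p_lt_one (by omega)
  have hone : ∀ w : ℤ_[p], ‖(1 : ℚ_[p]) + (p : ℚ_[p]) ^ n * (w : ℚ_[p])‖ = 1 := by
    intro w
    have hne : ‖(1 : ℚ_[p])‖ ≠ ‖(p : ℚ_[p]) ^ n * (w : ℚ_[p])‖ := by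
      rw [norm_one]; exact (ne_of_lt (hlt1 w)).symm
    rw [Padic.add_eq_max_of_ne hne, norm_one]
    exact max_eq_left (le_of_lt (hlt1 w))
  by_cases hx : ∃ x ∈ S, x ≠ c
  · right; left
    obtain ⟨x, hxS, hxc⟩ := hx
    rw [hS] at hxS
    obtain ⟨h1, h2, k, z, hz⟩ := hxS
    set L := lam * (p : ℚ_[p]) ^ (k * (m : ℤ)) with hL
    have hLne : L ≠ 0 := by
      intro h0
      exact hxc (sub_eq_zero.mp (by rw [hz, h0, zero_mul]))
    have hnorm : ∀ w : ℤ_[p], ‖L * (1 + (p : ℚ_[p]) ^ n * (w : ℚ_[p]))‖ = ‖x - c‖ := by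
      intro w
      simp only [hz, norm_mul, hone]
    apply Set.infinite_of_injective_forall_mem
      (f := fun w : ℤ_[p] => c + L * (1 + (p : ℚ_[p]) ^ n * (w : ℚ_[p]))) ?_ ?_
    · intro w₁ w₂ h
      simp only [add_right_inj] at h
      have h' := mul_left_cancel₀ hLne h
      have h'' : (p : ℚ_[p]) ^ n * (w₁ : ℚ_[p]) = (p : ℚ_[p]) ^ n * (w₂ : ℚ_[p]) :=
        add_left_cancel h'
      have hpn : ((p : ℚ_[p]) ^ n) ≠ 0 := by
        apply pow_ne_zero
        exact_mod_cast (Fact.out : p.Prime).ne_zero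
      exact Subtype.ext (mul_left_cancel₀ hpn h'')
    · intro w
      rw [hS]
      refine ⟨?_, ?_, k, w, by ring⟩
      · intro hb
        have := h1 hb
        rwa [add_sub_cancel_left, hnorm w]
      · intro hb
        have := h2 hb
        rwa [add_sub_cancel_left, hnorm w]
  · push_neg at hx
    by_cases hc : c ∈ S
    · right; right
      apply Set.eq_singleton_iff_unique_mem.mpr ⟨hc, fun x hxS => hx x hxS⟩
    · left
      ext x
      simp only [Set.mem_empty_iff_false, iff_false]
      intro hxS
      exact hc ((hx x hxS) ▸ hxS)
end

section
/- Let M be a structure and φ(x; y) a formula such that the bipartite graph with edge set {(a, b) ∈ M^{|x|} × M^{|y|} : M ⊨ φ(a, b)} contains no complete bipartite subgraph K_{s,u} (with parts of size s on the x-side and u on the y-side). Then the shatter function π_φ(n) = max over n-element subsets A of M^{|x|} of |{A ∩ φ(M^{|x|}, b) : b ∈ M^{|y|}}| satisfies π_φ(n) = O(n^s). In particular the VC density of φ is at most s. -/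
/-- If `F` is a family of subsets of `X` containing no `K_{s,u}` (no `s`
distinct points all lying in `u` distinct sets of `F`), then for every finite `A ⊆ X`
with `|A| = n`, the number of traces `{A ∩ f : f ∈ F}` is at most
`Σ_{i<s} C(n,i) + (u - 1)·C(n,s) = O(n^s)`; in particular the VC density of the
corresponding formula is at most `s`. -/
theorem stmt_5 {X : Type*} (F : Set (Set X)) (s u : ℕ) (hs : 0 < s) (hu : 0 < u)
    (hK : ¬ ∃ (P : Finset X) (G : Finset (Set X)), P.card = s ∧ G.card = u ∧
      (G : Set (Set X)) ⊆ F ∧ ∀ x ∈ P, ∀ f ∈ G, x ∈ f)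
    (A : Finset X) :
    Set.ncard {T : Set X | ∃ f ∈ F, T = (A : Set X) ∩ f} ≤
      (∑ i ∈ Finset.range s, A.card.choose i) + (u - 1) * A.card.choose s := by
  classical
  set 𝒯 : Finset (Finset X) :=
    A.powerset.filter (fun B => ∃ f ∈ F, (B : Set X) = (A : Set X) ∩ f) with h𝒯
  have hset : {T : Set X | ∃ f ∈ F, T = (A : Set X) ∩ f}
      = ((fun B : Finset X => (B : Set X)) '' ↑𝒯) := by
    ext T
    constructor
    · rintro ⟨f, hf, rfl⟩
      refine ⟨A.filter (· ∈ f), ?_, ?_⟩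
      · simp only [h𝒯, Finset.mem_coe, Finset.mem_filter, Finset.mem_powerset]
        refine ⟨Finset.filter_subset _ _, f, hf, ?_⟩
        ext x; simp
      · ext x; simp
    · rintro ⟨B, hB, rfl⟩
      simp only [h𝒯, Finset.mem_coe, Finset.mem_filter, Finset.mem_powerset] at hB
      obtain ⟨-, f, hf, hBf⟩ := hB
      exact ⟨f, hf, hBf⟩
  rw [hset, ← Finset.coe_image, Set.ncard_coe_finset,
    Finset.card_image_of_injective _ Finset.coe_injective]
  have hTA : ∀ B ∈ 𝒯, B ⊆ A := by
    intro B hB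
    simp only [h𝒯, Finset.mem_filter, Finset.mem_powerset] at hB
    exact hB.1
  -- selection of a witness set f for each trace
  have hsel : ∀ B ∈ 𝒯, ∃ f ∈ F, (B : Set X) = (A : Set X) ∩ f := by
    intro B hB
    simp only [h𝒯, Finset.mem_filter] at hB
    exact hB.2
  set fsel : Finset X → Set X := fun B =>
    if h : ∃ f ∈ F, (B : Set X) = (A : Set X) ∩ f then h.choose else ∅ with hfsel_def
  have hfsel : ∀ B ∈ 𝒯, fsel B ∈ F ∧ (B : Set X) = (A : Set X) ∩ fsel B := by
    intro B hB
    have h := hsel B hB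
    simp only [hfsel_def, dif_pos h]
    exact ⟨h.choose_spec.1, h.choose_spec.2⟩
  rw [← Finset.card_filter_add_card_filter_not (s := 𝒯)
    (p := fun B => B.card < s)]
  gcongr
  · -- small traces
    have hsub : 𝒯.filter (fun B => B.card < s)
        ⊆ (Finset.range s).biUnion (fun i => A.powersetCard i) := by
      intro B hB
      simp only [Finset.mem_filter] at hB
      simp only [Finset.mem_biUnion, Finset.mem_range, Finset.mem_powersetCard]
      exact ⟨B.card, hB.2, hTA B hB.1, rfl⟩
    calc (𝒯.filter (fun B => B.card < s)).card
        ≤ ((Finset.range s).biUnion (fun i => A.powersetCard i)).card :=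
          Finset.card_le_card hsub
      _ ≤ ∑ i ∈ Finset.range s, (A.powersetCard i).card := Finset.card_biUnion_le
      _ = ∑ i ∈ Finset.range s, A.card.choose i := by
          simp [Finset.card_powersetCard]
  · -- big traces
    set 𝒮 := 𝒯.filter (fun B => ¬ B.card < s) with h𝒮
    have h𝒮T : 𝒮 ⊆ 𝒯 := Finset.filter_subset _ _
    set g : Finset X → Finset X := fun B =>
      if h : ∃ S ⊆ B, S.card = s then h.choose else ∅ with hg_def
    have hg : ∀ B ∈ 𝒮, g B ⊆ B ∧ (g B).card = s := by
      intro B hB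
      simp only [h𝒮, Finset.mem_filter, not_lt] at hB
      have h : ∃ S ⊆ B, S.card = s := Finset.exists_subset_card_eq hB.2
      simp only [hg_def, dif_pos h]
      exact ⟨h.choose_spec.1, h.choose_spec.2⟩
    have hfib : ∀ S ∈ 𝒮.image g, (𝒮.filter fun B => g B = S).card ≤ u - 1 := by
      intro S hS
      by_contra hlt
      have hu' : u ≤ (𝒮.filter fun B => g B = S).card := by omega
      obtain ⟨G0, hG0sub, hG0card⟩ := Finset.exists_subset_card_eq hu'
      obtain ⟨B₀, hB₀, hB₀S⟩ := Finset.mem_image.mp hS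
      have hG0T : ∀ B ∈ G0, B ∈ 𝒯 := by
        intro B hB
        exact h𝒮T (Finset.mem_filter.mp (hG0sub hB)).1
      have hinj : Set.InjOn fsel ↑G0 := by
        intro B hB B' hB' hE
        have h1 := (hfsel B (hG0T B hB)).2
        have h2 := (hfsel B' (hG0T B' hB')).2
        apply Finset.coe_injective
        rw [h1, h2, hE]
      refine hK ⟨S, G0.image fsel, ?_, ?_, ?_, ?_⟩
      · rw [← hB₀S]; exact (hg B₀ hB₀).2
      · rw [Finset.card_image_of_injOn hinj, hG0card]
      · intro f hf
        obtain ⟨B, hB, rfl⟩ := Finset.mem_image.mp (Finset.mem_coe.mp hf)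
        exact (hfsel B (hG0T B hB)).1
      · intro x hx f hf
        obtain ⟨B, hB, rfl⟩ := Finset.mem_image.mp hf
        have hBfib := hG0sub hB
        simp only [Finset.mem_filter] at hBfib
        have hxB : x ∈ B := (hg B hBfib.1).1 (hBfib.2 ▸ hx)
        have := (hfsel B (hG0T B hB)).2
        have : (x : X) ∈ (A : Set X) ∩ fsel B := this ▸ (Finset.mem_coe.mpr hxB)
        exact this.2
    have himg : 𝒮.image g ⊆ A.powersetCard s := by
      intro S hS
      obtain ⟨B, hB, rfl⟩ := Finset.mem_image.mp hS
      rw [Finset.mem_powersetCard]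
      exact ⟨(hg B hB).1.trans (hTA B (h𝒮T hB)), (hg B hB).2⟩
    calc 𝒮.card ≤ (u - 1) * (𝒮.image g).card :=
        Finset.card_le_mul_card_image 𝒮 (u - 1) hfib
      _ ≤ (u - 1) * A.card.choose s := by
          have := Finset.card_le_card himg
          rw [Finset.card_powersetCard] at this
          exact Nat.mul_le_mul_left _ this
end

section
/- Combinatorial core of the K_{s,u}-free trace bound: let X be a set and F a family of subsets of X such that there do not exist s distinct points x₁,…,x_s ∈ X and u distinct sets F₁,…,F_u ∈ F with x_i ∈ F_j for all i, j. Then for any finite A ⊆ X with |A| = n, the number of distinct sets of the form A ∩ F (F ∈ F) of cardinality at least s is at most (u − 1)·C(n, s). -/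
/-- Combinatorial core of the `K_{s,u}`-free trace bound: if there are no
`s` distinct points of `X` lying simultaneously in `u` distinct sets of `F`, then for
any finite `A ⊆ X` with `|A| = n`, the number of distinct traces `A ∩ f` (`f ∈ F`) of
cardinality at least `s` is at most `(u - 1)·C(n, s)`. -/
theorem stmt_6 {X : Type*} (F : Set (Set X)) (s u : ℕ) (hs : 0 < s) (hu : 0 < u)
    (hK : ¬ ∃ (P : Finset X) (G : Finset (Set X)), P.card = s ∧ G.card = u ∧
      (G : Set (Set X)) ⊆ F ∧ ∀ x ∈ P, ∀ f ∈ G, x ∈ f)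
    (A : Finset X) :
    Set.ncard {T : Set X | (∃ f ∈ F, T = (A : Set X) ∩ f) ∧ s ≤ T.ncard} ≤
      (u - 1) * A.card.choose s := by
  classical
  set 𝒯 : Finset (Finset X) :=
    A.powerset.filter (fun T => s ≤ T.card ∧ ∃ f ∈ F, (T : Set X) = (A : Set X) ∩ f)
    with h𝒯
  -- Step 1: the set of traces injects into 𝒯
  have hsub : {T : Set X | (∃ f ∈ F, T = (A : Set X) ∩ f) ∧ s ≤ T.ncard}
      ⊆ (fun t : Finset X => (t : Set X)) '' ↑𝒯 := by
    rintro T ⟨⟨f, hf, rfl⟩, hcard⟩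
    have hco : ((A.filter (· ∈ f)) : Set X) = (A : Set X) ∩ f := by
      ext x; simp [Set.mem_inter_iff]
    refine ⟨A.filter (· ∈ f), ?_, hco⟩
    simp only [h𝒯, Finset.mem_coe, Finset.mem_filter, Finset.mem_powerset]
    refine ⟨Finset.filter_subset _ _, ?_, f, hf, hco⟩
    rwa [← hco, Set.ncard_coe_finset] at hcard
  have h1 : Set.ncard {T : Set X | (∃ f ∈ F, T = (A : Set X) ∩ f) ∧ s ≤ T.ncard}
      ≤ 𝒯.card := by
    calc _ ≤ ((fun t : Finset X => (t : Set X)) '' ↑𝒯).ncard :=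
          Set.ncard_le_ncard hsub ((𝒯.finite_toSet).image _)
      _ ≤ (↑𝒯 : Set (Finset X)).ncard := Set.ncard_image_le 𝒯.finite_toSet
      _ = 𝒯.card := Set.ncard_coe_finset _
  -- pick an s-subset of each trace
  set g : Finset X → Finset X := fun T =>
    if h : s ≤ T.card then (Finset.exists_subset_card_eq h).choose else ∅ with hg
  have hgspec : ∀ T : Finset X, s ≤ T.card → g T ⊆ T ∧ (g T).card = s := by
    intro T h
    have := (Finset.exists_subset_card_eq h).choose_spec
    simp only [hg, dif_pos h]
    exact this
  -- pick a witness set of F for each trace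
  set fch : Finset X → Set X := fun T =>
    if h : ∃ f ∈ F, (T : Set X) = (A : Set X) ∩ f then h.choose else ∅ with hfch
  have hfchspec : ∀ T : Finset X, (∃ f ∈ F, (T : Set X) = (A : Set X) ∩ f) →
      fch T ∈ F ∧ (T : Set X) = (A : Set X) ∩ fch T := by
    intro T h
    have := h.choose_spec
    simp only [hfch, dif_pos h]
    exact this
  -- fiber bound
  have hfiber : ∀ b ∈ 𝒯.image g, (𝒯.filter fun T => g T = b).card ≤ u - 1 := by
    intro b hb
    simp only [Finset.mem_image] at hb
    obtain ⟨T0, hT0, rfl⟩ := hb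
    have hT0' := (Finset.mem_filter.mp hT0).2
    have hbcard : (g T0).card = s := (hgspec T0 hT0'.1).2
    by_contra hlt
    have hge : u ≤ (𝒯.filter fun T => g T = g T0).card := by omega
    obtain ⟨C, hCsub, hCcard⟩ := Finset.exists_subset_card_eq hge
    have hmem : ∀ T ∈ C, T ∈ 𝒯 ∧ g T = g T0 := fun T hT => Finset.mem_filter.mp (hCsub hT)
    have hex : ∀ T ∈ C, ∃ f ∈ F, (T : Set X) = (A : Set X) ∩ f := by
      intro T hT
      exact ((Finset.mem_filter.mp ((hmem T hT).1)).2).2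
    apply hK
    refine ⟨g T0, C.image fch, hbcard, ?_, ?_, ?_⟩
    · rw [Finset.card_image_of_injOn, hCcard]
      intro T1 h1' T2 h2' heq
      have e1 := (hfchspec T1 (hex T1 h1')).2
      have e2 := (hfchspec T2 (hex T2 h2')).2
      apply Finset.coe_injective
      rw [e1, e2, heq]
    · intro f hf
      simp only [Finset.coe_image, Set.mem_image, Finset.mem_coe] at hf
      obtain ⟨T, hT, rfl⟩ := hf
      exact (hfchspec T (hex T hT)).1
    · intro x hx f hf
      simp only [Finset.mem_image] at hf
      obtain ⟨T, hT, rfl⟩ := hf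
      obtain ⟨hT𝒯, hgT⟩ := hmem T hT
      have hsT : s ≤ T.card := (Finset.mem_filter.mp hT𝒯).2.1
      have hxT : x ∈ T := (hgspec T hsT).1 (hgT ▸ hx)
      have e := (hfchspec T (hex T hT)).2
      have : (x : X) ∈ (T : Set X) := hxT
      rw [e] at this
      exact this.2
  have h2 : 𝒯.card ≤ (u - 1) * (𝒯.image g).card :=
    Finset.card_le_mul_card_image 𝒯 (u - 1) hfiber
  have h3 : (𝒯.image g).card ≤ A.card.choose s := by
    rw [← Finset.card_powersetCard]
    apply Finset.card_le_card
    intro b hb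
    simp only [Finset.mem_image] at hb
    obtain ⟨T, hT, rfl⟩ := hb
    simp only [h𝒯, Finset.mem_filter, Finset.mem_powerset] at hT
    obtain ⟨hTA, hTs, -⟩ := hT
    obtain ⟨hsub', hcard'⟩ := hgspec T hTs
    exact Finset.mem_powersetCard.mpr ⟨hsub'.trans hTA, hcard'⟩
  calc _ ≤ 𝒯.card := h1
    _ ≤ (u - 1) * (𝒯.image g).card := h2
    _ ≤ (u - 1) * A.card.choose s := Nat.mul_le_mul_left _ h3
end

section
/- Elekes' sum-product argument (abstract form): let R be an integral domain, A ⊆ R a finite set, P = (A + A) × (A · A), Q = A × A, and let E ⊆ P × Q be the incidence relation E((p₁,p₂),(a,b)) ⟺ b·(p₁ − a) = p₂. Then |E| ≥ |A|³, and moreover E, viewed as a bipartite graph between P and Q, contains no K_{2,2}: no two distinct pairs (a,b) ≠ (a',b') in Q with b, b' arbitrary are simultaneously incident to two distinct points of P. -/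
open scoped Pointwise
/-- Elekes' sum-product argument (abstract form).  In an integral domain
`R` with finite `A ⊆ R`, let `P = (A + A) × (A·A)`, `Q = A × A`, and
`E = {(p, q) ∈ P × Q : q₂·(p₁ - q₁) = p₂}`.  Then `|E| ≥ |A|³`, and `E` contains no
`K_{2,2}` among lines with nonzero slope: no two distinct parameter pairs (with
nonzero second coordinates) are simultaneously incident to two distinct points. -/
theorem stmt_7 {R : Type*} [CommRing R] [IsDomain R] [DecidableEq R] (A : Finset R) :
    ∀ P Q : Finset (R × R), P = (A + A) ×ˢ (A * A) → Q = A ×ˢ A →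
      A.card ^ 3 ≤ ((P ×ˢ Q).filter (fun pq => pq.2.2 * (pq.1.1 - pq.2.1) = pq.1.2)).card ∧
      (∀ q ∈ Q, ∀ q' ∈ Q, q ≠ q' → q.2 ≠ 0 → q'.2 ≠ 0 →
        ∀ pt ∈ P, ∀ pt' ∈ P, pt ≠ pt' →
          pt.2 = q.2 * (pt.1 - q.1) → pt.2 = q'.2 * (pt.1 - q'.1) →
          pt'.2 = q.2 * (pt'.1 - q.1) → pt'.2 = q'.2 * (pt'.1 - q'.1) → False) := by
  rintro P Q rfl rfl
  constructor
  · -- injection ((a,b),c) ↦ ((a+c, b*c), (a,b))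
    have h := Finset.card_le_card_of_injOn
      (f := fun x : (R × R) × R => ((x.1.1 + x.2, x.1.2 * x.2), (x.1.1, x.1.2)))
      (s := (A ×ˢ A) ×ˢ A)
      (t := ((((A + A) ×ˢ (A * A)) ×ˢ (A ×ˢ A)).filter
        (fun pq => pq.2.2 * (pq.1.1 - pq.2.1) = pq.1.2)))
      (by
        rintro ⟨⟨a, b⟩, c⟩ hx
        simp only [Finset.mem_coe, Finset.mem_product] at hx
        obtain ⟨⟨ha, hb⟩, hc⟩ := hx
        simp only [Finset.mem_coe, Finset.mem_filter, Finset.mem_product]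
        refine ⟨⟨⟨Finset.add_mem_add ha hc, Finset.mul_mem_mul hb hc⟩, ha, hb⟩, ?_⟩
        ring_nf)
      (by
        rintro ⟨⟨a, b⟩, c⟩ _ ⟨⟨a', b'⟩, c'⟩ _ h
        simp only [Prod.mk.injEq] at h
        obtain ⟨⟨h1, _⟩, h3, h4⟩ := h
        subst h3 h4
        have : c = c' := add_left_cancel h1
        simp [this])
    calc A.card ^ 3 = ((A ×ˢ A) ×ˢ A).card := by
          simp [Finset.card_product]; ring
      _ ≤ _ := h
  · rintro ⟨a, b⟩ hq ⟨a', b'⟩ hq' hne hb hb' ⟨x, y⟩ hp ⟨x', y'⟩ hp' hpne e1 e2 e3 e4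
    simp only at *
    by_cases hx : x = x'
    · subst hx
      exact hpne (by rw [Prod.mk.injEq]; exact ⟨rfl, e1.trans e3.symm⟩)
    · have hbb' : b = b' := by
        have : b * (x - x') = b' * (x - x') := by
          have := e1.symm.trans e2
          have := e3.symm.trans e4
          ring_nf at *
          linear_combination e2 - e1 - e4 + e3
        have := mul_right_cancel₀ (sub_ne_zero.mpr hx) this
        exact this
      subst hbb'
      have : a = a' := by
        have h5 : b * (x - a) = b * (x - a') := e1.symm.trans e2
        have := mul_left_cancel₀ hb h5
        exact sub_right_injective this
      exact hne (by simp [this])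
end

section
/- Suppose for finite sets A, B in an integral domain R (with B not equal to {0}) and a real t ≥ 2, the incidence bound |E(P,Q)| ≤ α(|P|^{2(t−1)/(2t−1)} |Q|^{t/(2t−1)} + |P| + |Q|) holds for the relation y₁ + y₂x₁ = x₂ with P = B × (A + B·B), Q = A × B. Then |A + B·B| ≥ γ |A|^{(t−1)/(2(t−1))} |B|^{t/(2(t−1))} for a constant γ depending only on α and t. (Key counting input: |E(P,Q)| = |A||B|², since for each (a,b) ∈ Q and c ∈ B there is exactly one incident point of P with first coordinate c, namely (c, a + bc).) -/
open scoped Pointwise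

lemma stmt9_real_aux (α t : ℝ) (hα : 0 < α) (ht : 2 ≤ t) :
    ∃ γ : ℝ, 0 < γ ∧ ∀ a b K : ℝ, 1 ≤ a → 1 ≤ b → a ≤ K → b ≤ K →
      a * b ^ 2 ≤ α * ((b * K) ^ (2 * (t - 1) / (2 * t - 1)) * (a * b) ^ (t / (2 * t - 1))
          + b * K + a * b) →
      γ * a ^ ((t - 1) / (2 * (t - 1))) * b ^ (t / (2 * (t - 1))) ≤ K := by
  have ht1 : (0:ℝ) < t - 1 := by linarith
  have hc : (0:ℝ) < 2 * t - 1 := by linarith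
  set e₁ : ℝ := 2 * (t - 1) / (2 * t - 1) with he₁
  set e₂ : ℝ := t / (2 * t - 1) with he₂
  set s : ℝ := t / (2 * (t - 1)) with hs
  have he₁pos : 0 < e₁ := by positivity
  have ha_exp : (t - 1) / (2 * (t - 1)) = 1 / 2 := by
    rw [mul_comm, ← div_div, div_self ht1.ne']
  have hs_le_one : s ≤ 1 := by
    rw [hs, div_le_one (by linarith)]
    linarith
  have hs_half : s = 1 / 2 + 1 / (2 * (t - 1)) := by
    rw [hs]; field_simp; try ring
  have hspos : 0 ≤ s - 1/2 := by
    have : 0 < 1 / (2 * (t - 1)) := by positivity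
    rw [hs_half]; linarith
  set M : ℝ := max 1 (3 * α) with hM
  have hM1 : (1:ℝ) ≤ M := le_max_left _ _
  set γ₃ : ℝ := (3 * α) ^ (-(1 / e₁)) with hγ₃
  have hγ₃pos : 0 < γ₃ := Real.rpow_pos_of_pos (by linarith) _
  refine ⟨min (1 / (3 * α)) (min (1 / M) γ₃), by positivity, ?_⟩
  intro a b K ha hb haK hbK h
  have ha0 : (0:ℝ) < a := by linarith
  have hb0 : (0:ℝ) < b := by linarith
  have hK0 : (0:ℝ) < K := by linarith
  rw [ha_exp]
  set γ := min (1 / (3 * α)) (min (1 / M) γ₃) with hγ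
  have hγpos : 0 < γ := by positivity
  have hcase : a * b ^ 2 ≤ 3 * α * ((b * K) ^ e₁ * (a * b) ^ e₂) ∨
      a * b ^ 2 ≤ 3 * α * (b * K) ∨ a * b ^ 2 ≤ 3 * α * (a * b) := by
    by_contra hcon
    push_neg at hcon
    obtain ⟨h1, h2, h3⟩ := hcon
    nlinarith [h, hα]
  have hhalf : a ^ ((1:ℝ)/2) ≤ a := by
    calc a ^ ((1:ℝ)/2) ≤ a ^ (1:ℝ) :=
          Real.rpow_le_rpow_of_exponent_le ha (by norm_num)
    _ = a := Real.rpow_one a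
  have hbs : b ^ s ≤ b := by
    calc b ^ s ≤ b ^ (1:ℝ) := Real.rpow_le_rpow_of_exponent_le hb hs_le_one
    _ = b := Real.rpow_one b
  have hb2R : b ^ ((2:ℝ)) = b ^ (2:ℕ) := by
    rw [show (2:ℝ) = ((2:ℕ):ℝ) by norm_num, Real.rpow_natCast]
  rcases hcase with h1 | h2 | h3
  · -- main term
    have expand : (b * K) ^ e₁ * (a * b) ^ e₂ = a ^ e₂ * b ^ (e₁ + e₂) * K ^ e₁ := by
      rw [Real.mul_rpow hb0.le hK0.le, Real.mul_rpow ha0.le hb0.le,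
        Real.rpow_add hb0]
      ring
    rw [expand] at h1
    have key : a ^ (1 - e₂) * b ^ (2 - (e₁ + e₂)) ≤ 3 * α * K ^ e₁ := by
      rw [Real.rpow_sub ha0, Real.rpow_sub hb0, div_mul_div_comm,
        div_le_iff₀ (by positivity), Real.rpow_one]
      calc a * b ^ (2:ℝ) = a * b ^ (2:ℕ) := by rw [hb2R]
      _ ≤ 3 * α * (a ^ e₂ * b ^ (e₁ + e₂) * K ^ e₁) := h1
      _ = 3 * α * K ^ e₁ * (a ^ e₂ * b ^ (e₁ + e₂)) := by ring
    have h1e2 : 1 - e₂ = (t - 1) / (2 * t - 1) := by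
      rw [he₂]; rw [eq_div_iff hc.ne', sub_mul, div_mul_cancel₀ _ hc.ne']; ring
    have h2e : 2 - (e₁ + e₂) = t / (2 * t - 1) := by
      rw [he₁, he₂]; field_simp; try ring
    rw [h1e2, h2e] at key
    have key2 : (a ^ ((t-1)/(2*t-1)) * b ^ (t/(2*t-1)) / (3 * α)) ^ (1/e₁)
        ≤ (K ^ e₁) ^ ((1:ℝ)/e₁) := by
      apply Real.rpow_le_rpow (by positivity) _ (by positivity)
      rw [div_le_iff₀ (by positivity)]
      calc a ^ ((t-1)/(2*t-1)) * b ^ (t/(2*t-1)) ≤ 3 * α * K ^ e₁ := key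
      _ = K ^ e₁ * (3 * α) := by ring
    have hKe : (K ^ e₁) ^ ((1:ℝ)/e₁) = K := by
      rw [← Real.rpow_mul hK0.le, mul_one_div, div_self he₁pos.ne', Real.rpow_one]
    have hLHS : (a ^ ((t-1)/(2*t-1)) * b ^ (t/(2*t-1)) / (3 * α)) ^ (1/e₁)
        = γ₃ * (a ^ ((1:ℝ)/2) * b ^ s) := by
      rw [Real.div_rpow (by positivity) (by linarith),
        Real.mul_rpow (by positivity) (by positivity),
        ← Real.rpow_mul ha0.le, ← Real.rpow_mul hb0.le]
      have ea : (t-1)/(2*t-1) * (1/e₁) = 1/2 := by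
        rw [he₁]; rw [one_div_div, div_mul_div_comm, mul_comm (t-1), div_eq_iff (by positivity)]; ring
      have eb : t/(2*t-1) * (1/e₁) = s := by
        rw [he₁, hs]; rw [one_div_div, div_mul_div_comm, mul_comm t, mul_div_mul_left _ _ hc.ne']
      rw [ea, eb, hγ₃, Real.rpow_neg (by linarith), div_eq_mul_inv]
      ring
    rw [hKe, hLHS] at key2
    calc γ * a ^ ((1:ℝ)/2) * b ^ s ≤ γ₃ * a ^ ((1:ℝ)/2) * b ^ s := by
          apply mul_le_mul_of_nonneg_right _ (by positivity)
          apply mul_le_mul_of_nonneg_right _ (by positivity)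
          exact le_trans (min_le_right _ _) (min_le_right _ _)
    _ = γ₃ * (a ^ ((1:ℝ)/2) * b ^ s) := by ring
    _ ≤ K := key2
  · -- b*K term
    have hab3K : a * b ≤ 3 * α * K := by
      have hstep : b * (a * b) ≤ b * (3 * α * K) := by
        calc b * (a * b) = a * b ^ 2 := by ring
        _ ≤ 3 * α * (b * K) := h2
        _ = b * (3 * α * K) := by ring
      exact le_of_mul_le_mul_left hstep hb0
    calc γ * a ^ ((1:ℝ)/2) * b ^ s ≤ (1 / (3*α)) * a * b := by
          apply mul_le_mul _ hbs (by positivity) (by positivity)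
          exact mul_le_mul (min_le_left _ _) hhalf (by positivity) (by positivity)
    _ ≤ (1 / (3*α)) * (3 * α * K) := by
          rw [mul_assoc]
          exact mul_le_mul_of_nonneg_left hab3K (by positivity)
    _ = K := by field_simp
  · -- a*b term
    have hb3α : b ≤ 3 * α := by
      have hab0 : (0:ℝ) < a * b := mul_pos ha0 hb0
      have hstep : a * b * b ≤ a * b * (3 * α) := by
        calc a * b * b = a * b ^ 2 := by ring
        _ ≤ 3 * α * (a * b) := h3
        _ = a * b * (3 * α) := by ring
      exact le_of_mul_le_mul_left hstep hab0
    have hbe : b ^ (s - 1/2) ≤ M := by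
      calc b ^ (s - 1/2) ≤ (3*α) ^ (s - 1/2) :=
            Real.rpow_le_rpow hb0.le hb3α hspos
      _ ≤ M := by
            rcases le_or_gt (3*α) 1 with hle | hlt
            · calc (3*α) ^ (s - 1/2) ≤ 1 :=
                    Real.rpow_le_one (by positivity) hle hspos
              _ ≤ M := hM1
            · calc (3*α) ^ (s - 1/2) ≤ (3*α) ^ (1:ℝ) := by
                    apply Real.rpow_le_rpow_of_exponent_le hlt.le
                    have h2t : (1:ℝ) ≤ 2 * (t - 1) := by linarith
                    have : 1 / (2 * (t-1)) ≤ 1 := by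
                      rw [div_le_one (by linarith)]; linarith
                    rw [hs_half]; linarith
              _ = 3*α := Real.rpow_one _
              _ ≤ M := le_max_right _ _
    have habK : a ^ ((1:ℝ)/2) * b ^ ((1:ℝ)/2) ≤ K := by
      have hab : a * b ≤ K * K := mul_le_mul haK hbK hb0.le hK0.le
      calc a ^ ((1:ℝ)/2) * b ^ ((1:ℝ)/2) = (a*b) ^ ((1:ℝ)/2) :=
            (Real.mul_rpow ha0.le hb0.le).symm
      _ ≤ (K*K) ^ ((1:ℝ)/2) := Real.rpow_le_rpow (by positivity) hab (by norm_num)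
      _ = (K ^ (2:ℝ)) ^ ((1:ℝ)/2) := by
            rw [show K ^ (2:ℝ) = K ^ (2:ℕ) by
              rw [show (2:ℝ) = ((2:ℕ):ℝ) by norm_num, Real.rpow_natCast]]
            rw [sq]
      _ = K := by rw [← Real.rpow_mul hK0.le]; norm_num
    have hbsplit : b ^ s = b ^ (s - 1/2) * b ^ ((1:ℝ)/2) := by
      rw [← Real.rpow_add hb0]; ring_nf
    calc γ * a ^ ((1:ℝ)/2) * b ^ s
        = (γ * b ^ (s - 1/2)) * (a ^ ((1:ℝ)/2) * b ^ ((1:ℝ)/2)) := by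
          rw [hbsplit]; ring
    _ ≤ (1/M * M) * (a ^ ((1:ℝ)/2) * b ^ ((1:ℝ)/2)) := by
          apply mul_le_mul_of_nonneg_right _ (by positivity)
          apply mul_le_mul _ hbe (by positivity) (by positivity)
          exact le_trans (min_le_right _ _) (min_le_left _ _)
    _ ≤ 1 * K := by
          rw [one_div_mul_cancel (by positivity)]
          exact mul_le_mul_of_nonneg_left habK (by norm_num)
    _ = K := one_mul K

lemma stmt9_count_aux {R : Type*} [CommRing R] [IsDomain R] [DecidableEq R]
    (A B : Finset R) :
    (((B ×ˢ (A + B * B)) ×ˢ (A ×ˢ B)).filter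
        (fun pq => pq.2.1 + pq.2.2 * pq.1.1 = pq.1.2)).card
      = A.card * B.card ^ 2 := by
  have : (A ×ˢ (B ×ˢ B)).card
      = (((B ×ˢ (A + B * B)) ×ˢ (A ×ˢ B)).filter
        (fun pq => pq.2.1 + pq.2.2 * pq.1.1 = pq.1.2)).card := by
    apply Finset.card_bij
      (fun x _ => ((x.2.2, x.1 + x.2.1 * x.2.2), (x.1, x.2.1)))
    · intro x hx
      simp only [Finset.mem_product] at hx
      obtain ⟨ha, hb, hc⟩ := hx
      simp only [Finset.mem_filter, Finset.mem_product]
      exact ⟨⟨⟨hc, Finset.add_mem_add ha (Finset.mul_mem_mul hb hc)⟩, ha, hb⟩, by trivial⟩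
    · intro x hx y hy hxy
      simp only [Prod.mk.injEq] at hxy
      obtain ⟨⟨h1, _⟩, h3, h4⟩ := hxy
      exact Prod.ext h3 (Prod.ext h4 h1)
    · intro y hy
      simp only [Finset.mem_filter, Finset.mem_product] at hy
      obtain ⟨⟨⟨hc, _⟩, ha, hb⟩, heq⟩ := hy
      refine ⟨(y.2.1, y.2.2, y.1.1), ?_, ?_⟩
      · simp only [Finset.mem_product]
        exact ⟨ha, hb, hc⟩
      · simp only [Prod.mk.injEq, heq, and_self, and_true, true_and]
  rw [← this, Finset.card_product, Finset.card_product]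
  ring

/-- For finite sets `A, B` in an integral domain `R` with `B ≠ {0}`, and
`t ≥ 2`: let `P = B × (A + B·B)`, `Q = A × B`, and
`E(P,Q) = {((c,d),(a,b)) : a + b·c = d}`.  The key counting input holds:
`|E(P,Q)| = |A|·|B|²`; and there is a constant `γ > 0` depending only on `α, t` such
that whenever the incidence bound
`|E(P,Q)| ≤ α(|P|^{2(t-1)/(2t-1)} |Q|^{t/(2t-1)} + |P| + |Q|)` holds, then
`|A + B·B| ≥ γ |A|^{(t-1)/(2(t-1))} |B|^{t/(2(t-1))}`. -/
theorem stmt_9 {R : Type*} [CommRing R] [IsDomain R] [DecidableEq R]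
    (α t : ℝ) (hα : 0 < α) (ht : 2 ≤ t) :
    ∃ γ : ℝ, 0 < γ ∧
      ∀ A B : Finset R, A.Nonempty → B.Nonempty → B ≠ {0} →
        ∀ Pset Qset : Finset (R × R),
          Pset = B ×ˢ (A + B * B) → Qset = A ×ˢ B →
          ∀ Eset : Finset ((R × R) × (R × R)),
            Eset = (Pset ×ˢ Qset).filter
              (fun pq => pq.2.1 + pq.2.2 * pq.1.1 = pq.1.2) →
            Eset.card = A.card * B.card ^ 2 ∧
            (((Eset.card : ℝ) ≤
                α * ((Pset.card : ℝ) ^ (2 * (t - 1) / (2 * t - 1)) *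
                      (Qset.card : ℝ) ^ (t / (2 * t - 1)) +
                    (Pset.card : ℝ) + (Qset.card : ℝ))) →
              γ * (A.card : ℝ) ^ ((t - 1) / (2 * (t - 1))) *
                  (B.card : ℝ) ^ (t / (2 * (t - 1))) ≤
                (((A + B * B).card : ℝ))) := by
  obtain ⟨γ, hγpos, hγ⟩ := stmt9_real_aux α t hα ht
  refine ⟨γ, hγpos, ?_⟩
  intro A B hA hB hB0 Pset Qset hP hQ Eset hE
  subst hP; subst hQ; subst hE
  refine ⟨stmt9_count_aux A B, ?_⟩
  intro hbound
  obtain ⟨b₀, hb₀B, hb₀⟩ : ∃ x ∈ B, x ≠ 0 := by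
    by_contra hcon
    push_neg at hcon
    exact hB0 (Finset.eq_singleton_iff_nonempty_unique_mem.mpr ⟨hB, hcon⟩)
  obtain ⟨a₀, ha₀⟩ := hA
  have haK : A.card ≤ (A + B * B).card :=
    Finset.card_le_card_of_injOn (fun x => x + b₀ * b₀)
      (fun x hx => Finset.add_mem_add hx (Finset.mul_mem_mul hb₀B hb₀B))
      (fun x _ y _ h => by exact add_right_cancel h)
  have hbK : B.card ≤ (A + B * B).card :=
    Finset.card_le_card_of_injOn (fun x => a₀ + b₀ * x)
      (fun x hx => Finset.add_mem_add ha₀ (Finset.mul_mem_mul hb₀B hx))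
      (fun x _ y _ h => mul_left_cancel₀ hb₀ (add_left_cancel h))
  have hA1 : (1:ℝ) ≤ (A.card : ℝ) := by
    exact_mod_cast Nat.one_le_iff_ne_zero.mpr (Finset.card_ne_zero_of_mem ha₀)
  have hB1 : (1:ℝ) ≤ (B.card : ℝ) := by
    exact_mod_cast Nat.one_le_iff_ne_zero.mpr (Finset.card_ne_zero_of_mem hb₀B)
  have haKr : (A.card : ℝ) ≤ ((A + B * B).card : ℝ) := by exact_mod_cast haK
  have hbKr : (B.card : ℝ) ≤ ((A + B * B).card : ℝ) := by exact_mod_cast hbK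
  apply hγ _ _ _ hA1 hB1 haKr hbKr
  have hEc : ((((B ×ˢ (A + B * B)) ×ˢ (A ×ˢ B)).filter
      (fun pq => pq.2.1 + pq.2.2 * pq.1.1 = pq.1.2)).card : ℝ)
      = (A.card : ℝ) * (B.card : ℝ) ^ 2 := by
    rw [stmt9_count_aux A B]; push_cast; ring
  have hPc : (((B ×ˢ (A + B * B)).card : ℕ) : ℝ)
      = (B.card : ℝ) * ((A + B * B).card : ℝ) := by
    rw [Finset.card_product]; push_cast; ring
  have hQc : (((A ×ˢ B).card : ℕ) : ℝ) = (A.card : ℝ) * (B.card : ℝ) := by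
    rw [Finset.card_product]; push_cast; ring
  rw [hEc, hPc, hQc] at hbound
  exact hbound
end
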